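/- arXiv:1510.05498 — 12 statements merged into one kernel-verified Lean document; each statement's English description precedes it below -/
import Mathlib

section
/- Let L be a finite semidistributive lattice, x join-irreducible with lower cover x_*, and κ(x) = ⋁{y : y ∧ x = x_*}. Then κ(x) is meet-irreducible. -/
open Classical in
theorem stmt2 {L : Type*} [Lattice L] [Fintype L] [BoundedOrder L]
    (hSDj : ∀ a b c : L, a ⊔ b = a ⊔ c → a ⊔ b = a ⊔ (b ⊓ c))
    (hSDm : ∀ a b c : L, a ⊓ b = a ⊓ c → a ⊓ b = a ⊓ (b ⊔ c))
    (x xs : L) (hx : SupIrred x) (hcov : xs ⋖ x) (hmax : ∀ y, y < x → y ≤ xs) :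
    InfIrred ((Finset.univ.filter (fun y : L => y ⊓ x = xs)).sup id) := by
  set S := Finset.univ.filter (fun y : L => y ⊓ x = xs) with hS
  set K := S.sup id with hKdef
  have hxs_mem : xs ∈ S := by
    simp only [hS, Finset.mem_filter, Finset.mem_univ, true_and]
    exact inf_eq_left.mpr hcov.le
  have hxsK : xs ≤ K := Finset.le_sup (f := id) hxs_mem
  have hind : x ⊓ (K ⊔ xs) = xs := by
    refine Finset.sup_induction (p := fun z => x ⊓ (z ⊔ xs) = xs) ?_ ?_ ?_
    · simp [inf_eq_right.mpr hcov.le]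
    · intro a ha b hb
      have h := hSDm x (a ⊔ xs) (b ⊔ xs) (ha.trans hb.symm)
      rw [ha] at h
      have : (a ⊔ xs) ⊔ (b ⊔ xs) = (a ⊔ b) ⊔ xs := by
        rw [sup_sup_sup_comm, sup_idem]
      rw [this] at h
      exact h.symm
    · intro y hy
      simp only [hS, Finset.mem_filter, Finset.mem_univ, true_and] at hy
      have hxsy : xs ≤ y := by rw [← hy]; exact inf_le_left
      simp [id, sup_eq_left.mpr hxsy, inf_comm x y, hy]
  have hKx : x ⊓ K = xs := by rwa [sup_eq_left.mpr hxsK] at hind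
  have hmemK : ∀ y : L, y ⊓ x = xs → y ≤ K := fun y hy =>
    Finset.le_sup (f := id) (by simp [hS, hy])
  constructor
  · intro hm
    have hKtop : K = ⊤ := hm.eq_of_le le_top
    rw [hKtop, inf_top_eq] at hKx
    exact hcov.lt.ne' hKx
  · intro b c hbc
    by_contra h
    push_neg at h
    obtain ⟨hb, hc⟩ := h
    have hbK : K ≤ b := hbc ▸ inf_le_left
    have hcK : K ≤ c := hbc ▸ inf_le_right
    have key : ∀ a : L, K ≤ a → a ≠ K → x ≤ a := by
      intro a haK hane
      have h1 : xs ≤ x ⊓ a := le_inf hcov.le (le_trans hxsK haK)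
      rcases lt_or_eq_of_le (inf_le_left : x ⊓ a ≤ x) with hlt | heq
      · have := hmax _ hlt
        have hax : a ⊓ x = xs := le_antisymm (by rwa [inf_comm]) (by rwa [inf_comm] at h1)
        exact absurd (le_antisymm (hmemK a hax) haK) hane
      · exact inf_eq_left.mp heq
    have hxb := key b hbK hb
    have hxc := key c hcK hc
    have : x ≤ K := hbc ▸ le_inf hxb hxc
    have : x = xs := by rw [← hKx]; exact le_antisymm (le_inf le_rfl this) inf_le_left
    exact hcov.lt.ne' this
end

section
/- Let L be a finite semidistributive lattice, x join-irreducible, and κ(x) as above with upper cover κ(x)^*. Then the interval [x_*, κ(x)^*] equals the union of the intervals [x_*, κ(x)] and [x, κ(x)^*]. -/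
open Classical in
/-- `κ(x)`, the join of all elements whose meet with `x` is `xs`. -/
noncomputable def kap {L : Type*} [Lattice L] [Fintype L] [BoundedOrder L] (x xs : L) : L :=
  (Finset.univ.filter (fun y : L => y ⊓ x = xs)).sup id

theorem stmt3 {L : Type*} [Lattice L] [Fintype L] [BoundedOrder L]
    (hSDj : ∀ a b c : L, a ⊔ b = a ⊔ c → a ⊔ b = a ⊔ (b ⊓ c))
    (hSDm : ∀ a b c : L, a ⊓ b = a ⊓ c → a ⊓ b = a ⊓ (b ⊔ c))
    (x xs : L) (hx : SupIrred x) (hcov : xs ⋖ x) (hmax : ∀ y, y < x → y ≤ xs)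
    (ks : L) (hks : kap x xs ⋖ ks) (hksu : ∀ y, kap x xs < y → ks ≤ y) :
    Set.Icc xs ks = Set.Icc xs (kap x xs) ∪ Set.Icc x ks := by
  ext z
  simp only [Set.mem_Icc, Set.mem_union]
  constructor
  · rintro ⟨h1, h2⟩
    by_cases hxz : x ≤ z
    · exact Or.inr ⟨hxz, h2⟩
    · left
      refine ⟨h1, ?_⟩
      have hzx : z ⊓ x < x :=
        lt_of_le_of_ne inf_le_right (fun h => hxz (h ▸ inf_le_left))
      have hmeet : z ⊓ x = xs :=
        le_antisymm (hmax _ hzx) (le_inf h1 hcov.1.le)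
      exact Finset.le_sup (f := id) (by simp [hmeet])
  · rintro (⟨h1, h2⟩ | ⟨h1, h2⟩)
    · exact ⟨h1, h2.trans hks.1.le⟩
    · exact ⟨hcov.1.le.trans h1, h2⟩
end

section
/- Let L be a finite semidistributive lattice and x join-irreducible. Then x is the least element s of L with s ≤ κ(x)^* and s ≰ κ(x). -/
theorem stmt5 {L : Type*} [Lattice L] [Fintype L] [BoundedOrder L]
    (hSDj : ∀ a b c : L, a ⊔ b = a ⊔ c → a ⊔ b = a ⊔ (b ⊓ c))
    (hSDm : ∀ a b c : L, a ⊓ b = a ⊓ c → a ⊓ b = a ⊓ (b ⊔ c))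
    (x xs : L) (hx : SupIrred x) (hcov : xs ⋖ x) (hmax : ∀ y, y < x → y ≤ xs)
    (ks : L) (hks : kap x xs ⋖ ks) (hksu : ∀ y, kap x xs < y → ks ≤ y) :
    IsLeast {s : L | s ≤ ks ∧ ¬ s ≤ kap x xs} x := by
  classical
  have hxsx : xs ≤ x := hcov.1.le
  -- key : x ⊓ (xs ⊔ T.sup id) = xs whenever all elements of T meet x in xs
  have key : ∀ T : Finset L, (∀ y ∈ T, y ⊓ x = xs) → x ⊓ (xs ⊔ T.sup id) = xs := by
    intro T
    induction T using Finset.induction with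
    | empty => intro _; simp [inf_eq_right.mpr hxsx]
    | insert a T hnot ih =>
      intro hT
      have h1 : x ⊓ a = xs := by rw [inf_comm]; exact hT a (Finset.mem_insert_self a T)
      have h2 : x ⊓ (xs ⊔ T.sup id) = xs := ih (fun y hy => hT y (Finset.mem_insert_of_mem hy))
      have h3 := hSDm x a (xs ⊔ T.sup id) (h1.trans h2.symm)
      have h4 : x ⊓ (a ⊔ (xs ⊔ T.sup id)) = xs := h1 ▸ h3.symm
      rw [Finset.sup_insert]
      rw [show xs ⊔ (id a ⊔ T.sup id) = a ⊔ (xs ⊔ T.sup id) by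
        simp only [id]; rw [← sup_assoc, ← sup_assoc, sup_comm xs a]]
      exact h4
  have hmem : ∀ y : L, y ⊓ x = xs → y ≤ kap x xs := by
    intro y hy
    exact Finset.le_sup (f := id) (Finset.mem_filter.mpr ⟨Finset.mem_univ _, hy⟩)
  have hxskap : xs ≤ kap x xs := hmem xs (inf_eq_left.mpr hxsx)
  have hmeet : x ⊓ kap x xs = xs := by
    have h := key (Finset.univ.filter (fun y : L => y ⊓ x = xs)) (by
      intro y hy; exact (Finset.mem_filter.mp hy).2)
    have hsup : xs ⊔ (Finset.univ.filter (fun y : L => y ⊓ x = xs)).sup id = kap x xs := by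
      exact sup_eq_right.mpr hxskap
    rwa [hsup] at h
  have hxnk : ¬ x ≤ kap x xs := by
    intro h
    have : x = xs := by rw [← hmeet, inf_eq_left.mpr h]
    exact absurd this.symm hcov.1.ne
  have hxks : x ≤ ks := by
    have hksx : ks ⊓ x ≠ xs := fun h =>
      absurd (hmem ks h) (not_le_of_gt hks.1)
    rcases lt_or_eq_of_le (inf_le_right : ks ⊓ x ≤ x) with hlt | heq
    · have h1 : ks ⊓ x ≤ xs := hmax _ hlt
      have h2 : xs ≤ ks ⊓ x := le_inf (hxskap.trans hks.1.le) hxsx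
      exact absurd (le_antisymm h1 h2) hksx
    · exact heq ▸ inf_le_left
  constructor
  · exact ⟨hxks, hxnk⟩
  · rintro s ⟨hsk, hsnk⟩
    have h1 : kap x xs ⊔ s = ks := by
      refine le_antisymm (sup_le hks.1.le hsk) (hksu _ ?_)
      exact lt_of_le_of_ne le_sup_left (fun h => hsnk (le_sup_right.trans h.ge))
    have h2 : kap x xs ⊔ x = ks := by
      refine le_antisymm (sup_le hks.1.le hxks) (hksu _ ?_)
      exact lt_of_le_of_ne le_sup_left (fun h => hxnk (le_sup_right.trans h.ge))
    have h3 := hSDj (kap x xs) x s (h2.trans h1.symm)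
    have hxs : x ⊓ s = x := by
      rcases lt_or_eq_of_le (inf_le_left : x ⊓ s ≤ x) with hlt | heq
      · exfalso
        have hle : x ⊓ s ≤ kap x xs := (hmax _ hlt).trans hxskap
        rw [sup_eq_left.mpr hle] at h3
        exact hxnk (le_sup_right.trans h3.le)
      · exact heq
    exact inf_eq_left.mp hxs
end

section
/- Let L be a finite semidistributive lattice. The map κ from the set J(L) of join-irreducible elements to the set M(L) of meet-irreducible elements, defined by κ(x) = ⋁{y : y ∧ x = x_*}, is a bijection. -/
open Classical in
/-- The unique lower cover of a join-irreducible element in a finite lattice,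
here realized as the join of all strictly smaller elements. -/
noncomputable def lowerStar {L : Type*} [Lattice L] [Fintype L] [BoundedOrder L] (x : L) : L :=
  (Finset.univ.filter (fun y : L => y < x)).sup id

open Classical in
/-- `κ(x) = ⋁ {y | y ⊓ x = x_*}`. -/
noncomputable def kappa {L : Type*} [Lattice L] [Fintype L] [BoundedOrder L] (x : L) : L :=
  (Finset.univ.filter (fun y : L => y ⊓ x = lowerStar x)).sup id

open Classical

section Aux

variable {L : Type*} [Lattice L] [Fintype L] [BoundedOrder L]

/-- Dual of `lowerStar`: the meet of all strictly larger elements. -/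
noncomputable def upperStar (x : L) : L :=
  (Finset.univ.filter (fun y : L => x < y)).inf id

/-- Dual of `kappa`. -/
noncomputable def kappaD (m : L) : L :=
  (Finset.univ.filter (fun y : L => y ⊔ m = upperStar m)).inf id

lemma lowerStar_le (x : L) : lowerStar x ≤ x :=
  Finset.sup_le fun _ hy => le_of_lt (Finset.mem_filter.mp hy).2

lemma le_lowerStar {x y : L} (h : y < x) : y ≤ lowerStar x :=
  Finset.le_sup (f := id) (Finset.mem_filter.mpr ⟨Finset.mem_univ _, h⟩)

lemma le_upperStar (x : L) : x ≤ upperStar x :=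
  Finset.le_inf fun _ hy => le_of_lt (Finset.mem_filter.mp hy).2

lemma upperStar_le {x y : L} (h : x < y) : upperStar x ≤ y :=
  Finset.inf_le (f := id) (Finset.mem_filter.mpr ⟨Finset.mem_univ _, h⟩)

lemma lowerStar_lt {x : L} (hx : SupIrred x) : lowerStar x < x := by
  refine lt_of_le_of_ne (lowerStar_le x) ?_
  have key : ((Finset.univ.filter (fun y : L => y < x)).sup id) ≠ x := by
    refine Finset.sup_induction (p := fun y => y ≠ x) ?_ ?_ ?_
    · intro h; exact hx.1 (h ▸ isMin_bot)
    · intro a ha b hb hab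
      rcases hx.2 hab with h | h
      · exact ha h
      · exact hb h
    · intro y hy
      exact ne_of_lt (Finset.mem_filter.mp hy).2
  exact key

lemma lt_upperStar {m : L} (hm : InfIrred m) : m < upperStar m := by
  refine lt_of_le_of_ne (le_upperStar m) (Ne.symm ?_)
  have key : ((Finset.univ.filter (fun y : L => m < y)).inf id) ≠ m := by
    refine Finset.inf_induction (p := fun y => y ≠ m) ?_ ?_ ?_
    · intro h; exact hm.1 (h ▸ isMax_top)
    · intro a ha b hb hab
      rcases hm.2 hab with h | h
      · exact ha h
      · exact hb h
    · intro y hy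
      exact (ne_of_lt (Finset.mem_filter.mp hy).2).symm
  exact key

lemma le_dichotomy {x y : L} (hx : SupIrred x) (h : y ≤ x) : y = x ∨ y ≤ lowerStar x := by
  rcases eq_or_lt_of_le h with h' | h'
  · exact Or.inl h'
  · exact Or.inr (le_lowerStar h')

lemma ge_dichotomy {m y : L} (hm : InfIrred m) (h : m ≤ y) : y = m ∨ upperStar m ≤ y := by
  rcases eq_or_lt_of_le h with h' | h'
  · exact Or.inl h'.symm
  · exact Or.inr (upperStar_le h')

variable (hSDj : ∀ a b c : L, a ⊔ b = a ⊔ c → a ⊔ b = a ⊔ (b ⊓ c))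
variable (hSDm : ∀ a b c : L, a ⊓ b = a ⊓ c → a ⊓ b = a ⊓ (b ⊔ c))

lemma kappa_max {x y : L} (h : y ⊓ x = lowerStar x) : y ≤ kappa x :=
  Finset.le_sup (f := id) (Finset.mem_filter.mpr ⟨Finset.mem_univ _, h⟩)

lemma kappaD_min {m y : L} (h : y ⊔ m = upperStar m) : kappaD m ≤ y :=
  Finset.inf_le (f := id) (Finset.mem_filter.mpr ⟨Finset.mem_univ _, h⟩)

include hSDm in
lemma kappa_inf {x : L} (hx : SupIrred x) : kappa x ⊓ x = lowerStar x := by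
  have hlx : lowerStar x ≤ x := lowerStar_le x
  have hlmem : lowerStar x ⊓ x = lowerStar x := inf_eq_left.mpr hlx
  have hlk : lowerStar x ≤ kappa x := kappa_max hlmem
  have key : (((Finset.univ.filter (fun y : L => y ⊓ x = lowerStar x)).sup id) ⊔ lowerStar x)
      ⊓ x = lowerStar x := by
    refine Finset.sup_induction (p := fun y => (y ⊔ lowerStar x) ⊓ x = lowerStar x) ?_ ?_ ?_
    · show (⊥ ⊔ lowerStar x) ⊓ x = lowerStar x
      rw [bot_sup_eq]; exact hlmem
    · intro a ha b hb
      have ha' : x ⊓ (a ⊔ lowerStar x) = x ⊓ (b ⊔ lowerStar x) := by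
        rw [inf_comm x, inf_comm x, ha, hb]
      have h2 := hSDm x (a ⊔ lowerStar x) (b ⊔ lowerStar x) ha'
      have hre : (a ⊔ lowerStar x) ⊔ (b ⊔ lowerStar x) = (a ⊔ b) ⊔ lowerStar x := by
        rw [sup_sup_sup_comm, sup_idem]
      rw [hre] at h2
      show ((a ⊔ b) ⊔ lowerStar x) ⊓ x = lowerStar x
      rw [inf_comm, ← h2, inf_comm x, ha]
    · intro y hy
      have hy' := (Finset.mem_filter.mp hy).2
      have hly : lowerStar x ≤ y := (le_of_eq hy'.symm).trans inf_le_left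
      show (id y ⊔ lowerStar x) ⊓ x = lowerStar x
      rw [id_eq, sup_eq_left.mpr hly]
      exact hy'
  have key' : (kappa x ⊔ lowerStar x) ⊓ x = lowerStar x := key
  rwa [sup_eq_left.mpr hlk] at key'

include hSDj in
lemma kappaD_sup {m : L} (hm : InfIrred m) : kappaD m ⊔ m = upperStar m := by
  have hmu : m ≤ upperStar m := le_upperStar m
  have humem : upperStar m ⊔ m = upperStar m := sup_eq_left.mpr hmu
  have huk : kappaD m ≤ upperStar m := kappaD_min humem
  have key : (((Finset.univ.filter (fun y : L => y ⊔ m = upperStar m)).inf id) ⊓ upperStar m)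
      ⊔ m = upperStar m := by
    refine Finset.inf_induction (p := fun y => (y ⊓ upperStar m) ⊔ m = upperStar m) ?_ ?_ ?_
    · show (⊤ ⊓ upperStar m) ⊔ m = upperStar m
      rw [top_inf_eq]; exact humem
    · intro a ha b hb
      have ha' : m ⊔ (a ⊓ upperStar m) = m ⊔ (b ⊓ upperStar m) := by
        rw [sup_comm m, sup_comm m, ha, hb]
      have h2 := hSDj m (a ⊓ upperStar m) (b ⊓ upperStar m) ha'
      have hre : (a ⊓ upperStar m) ⊓ (b ⊓ upperStar m) = (a ⊓ b) ⊓ upperStar m := by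
        rw [inf_inf_inf_comm, inf_idem]
      rw [hre] at h2
      show ((a ⊓ b) ⊓ upperStar m) ⊔ m = upperStar m
      rw [sup_comm, ← h2, sup_comm m, ha]
    · intro y hy
      have hy' := (Finset.mem_filter.mp hy).2
      have hyu : y ≤ upperStar m := le_sup_left.trans (le_of_eq hy')
      show (id y ⊓ upperStar m) ⊔ m = upperStar m
      rw [id_eq, inf_eq_left.mpr hyu]
      exact hy'
  have key' : (kappaD m ⊓ upperStar m) ⊔ m = upperStar m := key
  rwa [inf_eq_left.mpr huk] at key'

include hSDm in
lemma not_le_kappa {x : L} (hx : SupIrred x) : ¬ x ≤ kappa x := by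
  intro h
  have : kappa x ⊓ x = x := inf_eq_right.mpr h
  rw [kappa_inf hSDm hx] at this
  exact (lowerStar_lt hx).ne this

include hSDj in
lemma not_kappaD_le {m : L} (hm : InfIrred m) : ¬ kappaD m ≤ m := by
  intro h
  have : kappaD m ⊔ m = m := sup_eq_right.mpr h
  rw [kappaD_sup hSDj hm] at this
  exact (lt_upperStar hm).ne' this

include hSDm in
lemma infIrred_kappa {x : L} (hx : SupIrred x) : InfIrred (kappa x) := by
  have hk := kappa_inf hSDm hx
  constructor
  · intro h
    exact not_le_kappa hSDm hx (le_top.trans (h le_top))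
  · intro b c hbc
    by_contra hcon
    push_neg at hcon
    obtain ⟨hb, hc⟩ := hcon
    have hxb : x ≤ b := by
      have hkb : kappa x ≤ b := hbc ▸ inf_le_left
      have h1 : lowerStar x ≤ b ⊓ x := by
        rw [← hk]; exact inf_le_inf_right x hkb
      rcases le_dichotomy hx (inf_le_right : b ⊓ x ≤ x) with h2 | h2
      · exact (le_of_eq h2.symm).trans inf_le_left
      · exact absurd (kappa_max (le_antisymm h2 h1)) (fun h => hb (le_antisymm h hkb))
    have hxc : x ≤ c := by
      have hkc : kappa x ≤ c := hbc ▸ inf_le_right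
      have h1 : lowerStar x ≤ c ⊓ x := by
        rw [← hk]; exact inf_le_inf_right x hkc
      rcases le_dichotomy hx (inf_le_right : c ⊓ x ≤ x) with h2 | h2
      · exact (le_of_eq h2.symm).trans inf_le_left
      · exact absurd (kappa_max (le_antisymm h2 h1)) (fun h => hc (le_antisymm h hkc))
    exact not_le_kappa hSDm hx (hbc ▸ le_inf hxb hxc)

include hSDj in
lemma supIrred_kappaD {m : L} (hm : InfIrred m) : SupIrred (kappaD m) := by
  have hk := kappaD_sup hSDj hm
  constructor
  · intro h
    exact not_kappaD_le hSDj hm ((h bot_le).trans bot_le)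
  · intro b c hbc
    by_contra hcon
    push_neg at hcon
    obtain ⟨hb, hc⟩ := hcon
    have hbm : b ≤ m := by
      have hkb : b ≤ kappaD m := hbc ▸ le_sup_left
      have h1 : b ⊔ m ≤ upperStar m := by
        rw [← hk]; exact sup_le_sup_right hkb m
      rcases ge_dichotomy hm (le_sup_right : m ≤ b ⊔ m) with h2 | h2
      · exact le_sup_left.trans (le_of_eq h2)
      · exact absurd (kappaD_min (le_antisymm h1 h2)) (fun h => hb (le_antisymm hkb h))
    have hcm : c ≤ m := by
      have hkc : c ≤ kappaD m := hbc ▸ le_sup_right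
      have h1 : c ⊔ m ≤ upperStar m := by
        rw [← hk]; exact sup_le_sup_right hkc m
      rcases ge_dichotomy hm (le_sup_right : m ≤ c ⊔ m) with h2 | h2
      · exact le_sup_left.trans (le_of_eq h2)
      · exact absurd (kappaD_min (le_antisymm h1 h2)) (fun h => hc (le_antisymm hkc h))
    exact not_kappaD_le hSDj hm (hbc ▸ sup_le hbm hcm)

include hSDm in
lemma kappa_sup {x : L} (hx : SupIrred x) : x ⊔ kappa x = upperStar (kappa x) := by
  have hmm : InfIrred (kappa x) := infIrred_kappa hSDm hx
  have h1 : kappa x < x ⊔ kappa x := by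
    refine lt_of_le_of_ne le_sup_right ?_
    intro h
    exact not_le_kappa hSDm hx (le_sup_left.trans h.symm.le)
  have h2 : upperStar (kappa x) ≤ x ⊔ kappa x := upperStar_le h1
  have hxu : x ≤ upperStar (kappa x) := by
    by_contra hcon
    have hlt : upperStar (kappa x) ⊓ x < x :=
      lt_of_le_of_ne inf_le_right
        (fun h => hcon ((le_of_eq h.symm).trans inf_le_left))
    have hle : upperStar (kappa x) ⊓ x ≤ lowerStar x := le_lowerStar hlt
    have hge : lowerStar x ≤ upperStar (kappa x) ⊓ x := by
      rw [← kappa_inf hSDm hx]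
      exact inf_le_inf_right x (le_upperStar (kappa x))
    have : upperStar (kappa x) ≤ kappa x := kappa_max (le_antisymm hle hge)
    exact (lt_upperStar hmm).not_ge this
  exact le_antisymm (sup_le hxu (le_upperStar (kappa x))) h2

include hSDj in
lemma kappaD_inf {m : L} (hm : InfIrred m) : kappaD m ⊓ m = lowerStar (kappaD m) := by
  have hjj : SupIrred (kappaD m) := supIrred_kappaD hSDj hm
  have h1 : kappaD m ⊓ m < kappaD m := by
    refine lt_of_le_of_ne inf_le_left ?_
    intro h
    exact not_kappaD_le hSDj hm ((le_of_eq h.symm).trans inf_le_right)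
  have h2 : kappaD m ⊓ m ≤ lowerStar (kappaD m) := le_lowerStar h1
  have hlm : lowerStar (kappaD m) ≤ m := by
    by_contra hcon
    have hlt : m < lowerStar (kappaD m) ⊔ m :=
      lt_of_le_of_ne le_sup_right
        (fun h => hcon (le_sup_left.trans h.symm.le))
    have hle : upperStar m ≤ lowerStar (kappaD m) ⊔ m := upperStar_le hlt
    have hge : lowerStar (kappaD m) ⊔ m ≤ upperStar m := by
      rw [← kappaD_sup hSDj hm]
      exact sup_le_sup_right (lowerStar_le (kappaD m)) m
    have : kappaD m ≤ lowerStar (kappaD m) := kappaD_min (le_antisymm hge hle)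
    exact (lowerStar_lt hjj).not_ge this
  exact le_antisymm h2 (le_inf (lowerStar_le (kappaD m)) hlm)

include hSDm hSDj in
lemma kappaD_kappa {x : L} (hx : SupIrred x) : kappaD (kappa x) = x := by
  have hmm : InfIrred (kappa x) := infIrred_kappa hSDm hx
  have hjx : kappaD (kappa x) ≤ x := kappaD_min (kappa_sup hSDm hx)
  rcases le_dichotomy hx hjx with h | h
  · exact h
  · exfalso
    have hlm : lowerStar x ≤ kappa x := by
      rw [← kappa_inf hSDm hx]; exact inf_le_left
    exact not_kappaD_le hSDj hmm (h.trans hlm)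

include hSDm hSDj in
lemma kappa_kappaD {m : L} (hm : InfIrred m) : kappa (kappaD m) = m := by
  have hjj : SupIrred (kappaD m) := supIrred_kappaD hSDj hm
  have hmk : m ≤ kappa (kappaD m) := by
    refine kappa_max ?_
    rw [inf_comm]
    exact kappaD_inf hSDj hm
  rcases ge_dichotomy hm hmk with h | h
  · exact h
  · exfalso
    have hju : kappaD m ≤ upperStar m := by
      rw [← kappaD_sup hSDj hm]; exact le_sup_left
    exact not_le_kappa hSDm hjj (hju.trans h)

end Aux

theorem stmt6 {L : Type*} [Lattice L] [Fintype L] [BoundedOrder L]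
    (hSDj : ∀ a b c : L, a ⊔ b = a ⊔ c → a ⊔ b = a ⊔ (b ⊓ c))
    (hSDm : ∀ a b c : L, a ⊓ b = a ⊓ c → a ⊓ b = a ⊓ (b ⊔ c)) :
    Set.BijOn (kappa : L → L) {x : L | SupIrred x} {m : L | InfIrred m} := by
  refine ⟨fun x hx => infIrred_kappa hSDm hx, ?_, ?_⟩
  · intro x hx y hy h
    have h1 := kappaD_kappa hSDj hSDm hx
    rw [h, kappaD_kappa hSDj hSDm hy] at h1
    exact h1.symm
  · intro m hm
    exact ⟨kappaD m, supIrred_kappaD hSDj hm, kappa_kappaD hSDj hSDm hm⟩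
end

section
/- Let L be a finite lattice such that for every join-irreducible x there exists an element κ(x) that is the largest element s with s ≥ x_* and s ≱ x. Then L satisfies the meet-semidistributive law SD∧: a∧b = a∧c implies a∧b = a∧(b∨c). -/
/-!
If `a ⊓ b = a ⊓ c < a ⊓ (b ⊔ c)`, take `t` minimal among the elements below `a ⊓ (b ⊔ c)` but not
below `d := a ⊓ b`. Everything strictly below `t` lies below `d`, so `t` is join-irreducible and
`t_* ≤ d ≤ b, c`. As `t ≰ b` and `t ≰ c`, both `b` and `c` lie below `κ(t)`, hence so does `b ⊔ c`,
contradicting `t ≤ b ⊔ c`.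
-/

theorem lowerStar_le_iff {L : Type*} [Lattice L] [Fintype L] [BoundedOrder L] {x d : L} :
    lowerStar x ≤ d ↔ ∀ y < x, y ≤ d := by
  simp [lowerStar]

theorem supIrred_of_forall_lt_le {L : Type*} [Lattice L] {t d : L} (ht : ¬ t ≤ d)
    (hlt : ∀ y < t, y ≤ d) : SupIrred t := by
  refine ⟨fun hmin => ht ((hmin inf_le_left).trans inf_le_right), fun u v huv => ?_⟩
  by_contra! hne
  exact ht (huv ▸ sup_le (hlt u ((huv ▸ le_sup_left).lt_of_ne hne.1))
    (hlt v ((huv ▸ le_sup_right).lt_of_ne hne.2)))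

theorem exists_le_not_le_forall_lt_le {L : Type*} [Preorder L] [WellFoundedLT L] {m d : L}
    (h : ¬ m ≤ d) : ∃ t ≤ m, ¬ t ≤ d ∧ ∀ y < t, y ≤ d := by
  obtain ⟨t, htm, hmin⟩ := exists_minimal_le_of_wellFoundedLT (fun t => ¬ t ≤ d) m h
  exact ⟨t, htm, hmin.prop, fun y hy => not_not.mp (hmin.not_prop_of_lt hy)⟩

theorem IsGreatest.le_or_le_of_le_sup {L : Type*} [SemilatticeSup L] {x y k b c : L}
    (hk : IsGreatest {s | y ≤ s ∧ ¬ x ≤ s} k) (hb : y ≤ b) (hc : y ≤ c) (hx : x ≤ b ⊔ c) :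
    x ≤ b ∨ x ≤ c := by
  by_contra! h
  exact hk.1.2 (hx.trans (sup_le (hk.2 ⟨hb, h.1⟩) (hk.2 ⟨hc, h.2⟩)))

theorem stmt7 {L : Type*} [Lattice L] [Fintype L] [BoundedOrder L]
    (hkappa : ∀ x : L, SupIrred x →
      ∃ k : L, IsGreatest {s : L | lowerStar x ≤ s ∧ ¬ x ≤ s} k) :
    ∀ a b c : L, a ⊓ b = a ⊓ c → a ⊓ b = a ⊓ (b ⊔ c) := by
  intro a b c habc
  by_contra hne
  have hnle : ¬ a ⊓ (b ⊔ c) ≤ a ⊓ b := fun hle =>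
    hne (le_antisymm (inf_le_inf_left a le_sup_left) hle)
  obtain ⟨t, htm, htd, hlt⟩ := exists_le_not_le_forall_lt_le hnle
  obtain ⟨k, hk⟩ := hkappa t (supIrred_of_forall_lt_le htd hlt)
  have hstar : lowerStar t ≤ a ⊓ b := lowerStar_le_iff.mpr hlt
  have hta : t ≤ a := htm.trans inf_le_left
  have hdc : a ⊓ b ≤ c := habc ▸ inf_le_right
  rcases hk.le_or_le_of_le_sup (hstar.trans inf_le_right) (hstar.trans hdc)
      (htm.trans inf_le_right) with htb | htc
  · exact htd (le_inf hta htb)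
  · exact htd (habc ▸ le_inf hta htc)
end

section
/- Let L be a finite semidistributive lattice and a, b join-irreducible. Define a B b iff a ≰ b, a ≤ a_* ∨ b, and a ≰ a_* ∨ b_*. Then a B b holds if and only if b_* ≤ κ(a) < κ(b). -/
theorem stmt9 {L : Type*} [Lattice L] [Fintype L] [BoundedOrder L]
    (hSDj : ∀ a b c : L, a ⊔ b = a ⊔ c → a ⊔ b = a ⊔ (b ⊓ c))
    (hSDm : ∀ a b c : L, a ⊓ b = a ⊓ c → a ⊓ b = a ⊓ (b ⊔ c))
    (a b : L) (ha : SupIrred a) (hb : SupIrred b)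
    (as : L) (has : as ⋖ a) (hasmax : ∀ y, y < a → y ≤ as)
    (bs : L) (hbs : bs ⋖ b) (hbsmax : ∀ y, y < b → y ≤ bs)
    (ka : L) (hka : IsGreatest {s : L | as ≤ s ∧ ¬ a ≤ s} ka)
    (kb : L) (hkb : IsGreatest {s : L | bs ≤ s ∧ ¬ b ≤ s} kb) :
    (¬ a ≤ b ∧ a ≤ as ⊔ b ∧ ¬ a ≤ as ⊔ bs) ↔ (bs ≤ ka ∧ ka < kb) := by
  obtain ⟨⟨hask, hak⟩, hkamax⟩ := hka
  obtain ⟨⟨hbsk, hbk⟩, hkbmax⟩ := hkb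
  constructor
  · rintro ⟨hab, h1, h2⟩
    have h3 : as ⊔ bs ≤ ka := hkamax ⟨le_sup_left, h2⟩
    have hbska : bs ≤ ka := le_trans le_sup_right h3
    have hbka : ¬ b ≤ ka := fun h => hak (h1.trans (sup_le hask h))
    have hkakb : ka ≤ kb := hkbmax ⟨hbska, hbka⟩
    -- b ≰ a ⊔ bs
    have key : ¬ b ≤ a ⊔ bs := by
      intro hb'
      have hainf : a ⊓ b ≤ as := by
        refine hasmax _ (lt_of_le_of_ne inf_le_left fun h => hab ?_)
        exact h ▸ inf_le_right
      have e1 : (as ⊔ bs) ⊔ a = (as ⊔ bs) ⊔ b := by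
        have l1 : (as ⊔ bs) ⊔ a = a ⊔ bs :=
          le_antisymm (sup_le (sup_le (has.le.trans le_sup_left) le_sup_right) le_sup_left)
            (sup_le (le_sup_right) (le_sup_right.trans le_sup_left))
        have l2 : (as ⊔ bs) ⊔ b = as ⊔ b := by
          rw [sup_assoc, sup_eq_right.mpr hbs.le]
        have l3 : as ⊔ b = a ⊔ b :=
          le_antisymm (sup_le (has.le.trans le_sup_left) le_sup_right)
            (sup_le (h1.trans (sup_le le_sup_left le_sup_right)) le_sup_right)
        have l4 : a ⊔ b = a ⊔ bs :=
          le_antisymm (sup_le le_sup_left hb')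
            (sup_le le_sup_left (hbs.le.trans le_sup_right))
        rw [l1, l2, l3, l4]
      have e2 := hSDj (as ⊔ bs) a b e1
      have : a ≤ as ⊔ bs := by
        have : (as ⊔ bs) ⊔ (a ⊓ b) = as ⊔ bs :=
          sup_eq_left.mpr (hainf.trans le_sup_left)
        calc a ≤ (as ⊔ bs) ⊔ a := le_sup_right
          _ = (as ⊔ bs) ⊔ (a ⊓ b) := e2
          _ = as ⊔ bs := this
      exact h2 this
    have hakb : a ≤ kb := le_trans le_sup_left (hkbmax ⟨le_sup_right, key⟩)
    exact ⟨hbska, lt_of_le_of_ne hkakb fun h => hak (h ▸ hakb)⟩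
  · rintro ⟨hbska, hlt⟩
    have h2 : ¬ a ≤ as ⊔ bs := fun h => hak (h.trans (sup_le hask hbska))
    have h1 : a ≤ as ⊔ b := by
      by_contra h
      have : b ≤ ka := le_trans le_sup_right
        (hkamax ⟨le_sup_left, fun h' => h h'⟩)
      exact hbk (this.trans hlt.le)
    have hab : ¬ a ≤ b := by
      intro h
      rcases h.lt_or_eq with hlt' | heq
      · exact hak ((hbsmax a hlt').trans hbska)
      · subst heq
        have hbsas : bs = as :=
          le_antisymm (hasmax bs hbs.lt) (hbsmax as has.lt)
        exact absurd (hkamax ⟨hbsas ▸ hbsk, hbk⟩) hlt.not_ge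
    exact ⟨hab, h1, h2⟩
end

section
/- Let L be a finite semidistributive lattice and p, q join-irreducible elements with p ≰ q, q ≰ p, p ≤ p_* ∨ q, p ≰ p_* ∨ q_*, q ≤ q_* ∨ p, and q ≰ q_* ∨ p_* (i.e., p B q and q B p). Then a contradiction follows; i.e., there are no two join-irreducibles p, q with p B q and q B p in a finite semidistributive lattice. -/
theorem stmt10 {L : Type*} [Lattice L] [Fintype L] [BoundedOrder L]
    (hSDj : ∀ a b c : L, a ⊔ b = a ⊔ c → a ⊔ b = a ⊔ (b ⊓ c))
    (hSDm : ∀ a b c : L, a ⊓ b = a ⊓ c → a ⊓ b = a ⊓ (b ⊔ c))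
    (p q : L) (hp : SupIrred p) (hq : SupIrred q)
    (ps : L) (hps : ps ⋖ p) (hpsmax : ∀ y, y < p → y ≤ ps)
    (qs : L) (hqs : qs ⋖ q) (hqsmax : ∀ y, y < q → y ≤ qs)
    (h1 : ¬ p ≤ q) (h2 : ¬ q ≤ p)
    (h3 : p ≤ ps ⊔ q) (h4 : ¬ p ≤ ps ⊔ qs)
    (h5 : q ≤ qs ⊔ p) (h6 : ¬ q ≤ qs ⊔ ps) :
    False := by
  have hpsle : ps ≤ p := hps.le
  have hqsle : qs ≤ q := hqs.le
  have hA : (ps ⊔ qs) ⊔ p = p ⊔ q := by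
    apply le_antisymm
    · exact sup_le (sup_le (hpsle.trans le_sup_left) (hqsle.trans le_sup_right)) le_sup_left
    · exact sup_le le_sup_right (h5.trans (sup_le (le_sup_right.trans le_sup_left) le_sup_right))
  have hB : (ps ⊔ qs) ⊔ q = p ⊔ q := by
    apply le_antisymm
    · exact sup_le (sup_le (hpsle.trans le_sup_left) (hqsle.trans le_sup_right)) le_sup_right
    · exact sup_le (h3.trans (sup_le (le_sup_left.trans le_sup_left) le_sup_right)) le_sup_right
  have hSD := hSDj (ps ⊔ qs) p q (hA.trans hB.symm)
  have hmeet : p ⊓ q ≤ ps := hpsmax _ (lt_of_le_of_ne inf_le_left (fun h => h1 (h ▸ inf_le_right)))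
  have : p ≤ ps ⊔ qs := by
    have hple : p ≤ (ps ⊔ qs) ⊔ (p ⊓ q) := le_sup_left.trans (hA.symm.trans hSD).le
    exact hple.trans (sup_le le_rfl (hmeet.trans le_sup_left))
  exact h4 this
end

section
/- Let L be a finite semidistributive lattice and p, q incomparable join-irreducibles with p ≤ p_* ∨ q and q ≤ q_* ∨ p. Then p_* ∨ q = p ∨ q_* = p_* ∨ q_*. -/
theorem stmt12 {L : Type*} [Lattice L] [Fintype L] [BoundedOrder L]
    (hSDj : ∀ a b c : L, a ⊔ b = a ⊔ c → a ⊔ b = a ⊔ (b ⊓ c))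
    (hSDm : ∀ a b c : L, a ⊓ b = a ⊓ c → a ⊓ b = a ⊓ (b ⊔ c))
    (p q : L) (hp : SupIrred p) (hq : SupIrred q)
    (ps : L) (hps : ps ⋖ p) (hpsmax : ∀ y, y < p → y ≤ ps)
    (qs : L) (hqs : qs ⋖ q) (hqsmax : ∀ y, y < q → y ≤ qs)
    (h1 : ¬ p ≤ q) (h2 : ¬ q ≤ p)
    (h3 : p ≤ ps ⊔ q) (h4 : q ≤ qs ⊔ p) :
    ps ⊔ q = p ⊔ qs ∧ p ⊔ qs = ps ⊔ qs := by
  have hpsle : ps ≤ p := hps.le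
  have hqsle : qs ≤ q := hqs.le
  have hA : ps ⊔ q = p ⊔ q :=
    le_antisymm (sup_le_sup_right hpsle q) (sup_le h3 le_sup_right)
  have hB : p ⊔ qs = p ⊔ q :=
    le_antisymm (sup_le_sup_left hqsle p)
      (sup_le le_sup_left (h4.trans (sup_comm qs p).le))
  set w := ps ⊔ qs with hw
  have hwle : w ≤ p ⊔ q := sup_le (le_trans hpsle le_sup_left) (le_trans hqsle le_sup_right)
  have hwp : w ⊔ p = p ⊔ q := by
    apply le_antisymm (sup_le hwle le_sup_left)
    refine sup_le le_sup_right ?_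
    calc q ≤ qs ⊔ p := h4
      _ ≤ w ⊔ p := sup_le_sup_right le_sup_right p
  have hwq : w ⊔ q = p ⊔ q := by
    apply le_antisymm (sup_le hwle le_sup_right)
    refine sup_le ?_ le_sup_right
    calc p ≤ ps ⊔ q := h3
      _ ≤ w ⊔ q := sup_le_sup_right le_sup_left q
  have hmeet : p ⊓ q ≤ ps := hpsmax _ (lt_of_le_of_ne inf_le_left (fun h => h1 (h ▸ inf_le_right)))
  have := hSDj w p q (hwp.trans hwq.symm)
  have hwfull : w ⊔ p = w := by
    rw [this]
    exact sup_eq_left.mpr (le_trans hmeet le_sup_left)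
  have hweq : w = p ⊔ q := by rw [← hwfull, hwp]
  exact ⟨hA.trans hB.symm, hB.trans hweq.symm⟩
end

section
/- Let L be a finite lattice satisfying SD∧ and let n* be the maximum, over all elements x of L, of the number of elements covering x. Then n* equals the breadth of L. -/
open Classical

private lemma sumh_lt {L : Type*} [Lattice L] [Fintype L] (A : Finset L) :
    (∑ y ∈ A, (Finset.univ.filter fun z : L => z ≤ y).card)
      < Fintype.card L * Fintype.card L + 1 := by
  have h1 : (∑ y ∈ A, (Finset.univ.filter fun z : L => z ≤ y).card)
      ≤ ∑ _y ∈ A, Fintype.card L := by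
    refine Finset.sum_le_sum fun y _ => ?_
    simpa using Finset.card_filter_le Finset.univ (fun z : L => z ≤ y)
  have h2 : (∑ _y ∈ A, Fintype.card L) = A.card * Fintype.card L := by simp [mul_comm]
  have h3 : A.card * Fintype.card L ≤ Fintype.card L * Fintype.card L :=
    Nat.mul_le_mul_right _ (Finset.card_le_univ A)
  omega

private lemma key_aux {L : Type*} [Lattice L] [Fintype L] [OrderBot L] :
    ∀ (n : ℕ) (a : L) (A : Finset L),
      (Finset.univ.filter fun z : L => a ≤ z).card * (Fintype.card L * Fintype.card L + 1)
        + (∑ y ∈ A, (Finset.univ.filter fun z : L => z ≤ y).card) ≤ n →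
      (∀ y ∈ A, a ≤ y) →
      (∀ y ∈ A, a ⊔ (A.erase y).sup id < a ⊔ A.sup id) →
      ∃ x : L, A.card ≤ (Finset.univ.filter fun y : L => x ⋖ y).card := by
  intro n
  induction n using Nat.strong_induction_on with
  | _ n IH =>
  intro a A hμ ha hirr
  rcases A.eq_empty_or_nonempty with rfl | hA
  · exact ⟨a, by simp⟩
  set C : ℕ := Fintype.card L * Fintype.card L + 1 with hC
  set s : L := a ⊔ A.sup id with hs
  have hts : ∀ y ∈ A, a ⊔ (A.erase y).sup id ≤ s := fun y hy => (hirr y hy).le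
  by_cases hc1 : ∃ y ∈ A, ∃ z, a ≤ z ∧ z < y ∧ z ⊔ (a ⊔ (A.erase y).sup id) = s
  · -- Case 1: replace y by the smaller z
    obtain ⟨y, hy, z, haz, hzy, hzt⟩ := hc1
    have hznot : z ∉ A.erase y := by
      intro hz
      have h1 : z ≤ a ⊔ (A.erase y).sup id :=
        le_sup_of_le_right (Finset.le_sup (f := id) hz)
      rw [sup_eq_right.mpr h1] at hzt
      exact absurd hzt (ne_of_lt (hirr y hy))
    set A' : Finset L := insert z (A.erase y) with hA'
    have hsupA' : a ⊔ A'.sup id = s := by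
      have hcomm : a ⊔ (id z ⊔ (A.erase y).sup id) = z ⊔ (a ⊔ (A.erase y).sup id) := by
        simp only [id_eq]
        rw [← sup_assoc, sup_comm a z, sup_assoc]
      rw [hA', Finset.sup_insert, hcomm, hzt]
    have hcard : A'.card = A.card := by
      rw [hA', Finset.card_insert_of_notMem hznot, Finset.card_erase_of_mem hy]
      have : 1 ≤ A.card := Finset.card_pos.mpr hA
      omega
    have ha' : ∀ y' ∈ A', a ≤ y' := by
      intro y' hy'
      rcases Finset.mem_insert.mp hy' with rfl | hy'
      · exact haz
      · exact ha y' (Finset.mem_of_mem_erase hy')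
    have hirr' : ∀ y' ∈ A', a ⊔ (A'.erase y').sup id < a ⊔ A'.sup id := by
      intro y' hy'
      rw [hsupA']
      rcases Finset.mem_insert.mp hy' with rfl | hy'
      · rw [hA', Finset.erase_insert hznot]
        exact hirr y hy
      · have hy'y : y' ≠ y := Finset.ne_of_mem_erase hy'
        have hzy' : z ≠ y' := fun h => hznot (h ▸ hy')
        rw [hA', Finset.erase_insert_of_ne hzy']
        have hsub : (A.erase y).erase y' ⊆ A.erase y' := by
          intro u hu
          exact Finset.mem_erase.mpr ⟨(Finset.mem_erase.mp hu).1,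
            Finset.mem_of_mem_erase (Finset.mem_of_mem_erase hu)⟩
        have hyA : y ∈ A.erase y' := Finset.mem_erase.mpr ⟨fun h => hy'y h.symm, hy⟩
        have h1 : a ⊔ (insert z ((A.erase y).erase y')).sup id ≤ a ⊔ (A.erase y').sup id := by
          rw [Finset.sup_insert]
          refine sup_le le_sup_left (sup_le ?_ ?_)
          · exact le_sup_of_le_right (le_trans hzy.le (Finset.le_sup (f := id) hyA))
          · exact le_sup_of_le_right (Finset.sup_mono hsub)
        exact lt_of_le_of_lt h1 (hirr y' (Finset.mem_of_mem_erase hy'))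
    have hmeas : (Finset.univ.filter fun u : L => a ≤ u).card * C
        + (∑ w ∈ A', (Finset.univ.filter fun u : L => u ≤ w).card) < n := by
      have hzlty : (Finset.univ.filter fun u : L => u ≤ z).card
          < (Finset.univ.filter fun u : L => u ≤ y).card := by
        apply Finset.card_lt_card
        rw [Finset.ssubset_iff_of_subset]
        · exact ⟨y, by simp, by simp [hzy.not_ge]⟩
        · intro u hu
          simp only [Finset.mem_filter, Finset.mem_univ, true_and] at hu ⊢
          exact hu.trans hzy.le
      have h1 : (∑ w ∈ A', (Finset.univ.filter fun u : L => u ≤ w).card)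
          < ∑ w ∈ A, (Finset.univ.filter fun u : L => u ≤ w).card := by
        rw [hA', Finset.sum_insert hznot,
          ← Finset.add_sum_erase A _ hy]
        omega
      omega
    obtain ⟨x, hx⟩ := IH _ hmeas a A' le_rfl ha' hirr'
    exact ⟨x, hcard ▸ hx⟩
  by_cases hc2 : ∃ a', a < a' ∧ a' ≤ s ∧ ∀ y ∈ A, a' ⊔ (a ⊔ (A.erase y).sup id) < s
  · -- Case 2: raise the base to a'
    obtain ⟨a', haa', ha's, hall⟩ := hc2
    have hinj : Set.InjOn (fun y => a' ⊔ y) ↑A := by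
      intro y hy y' hy' hEq
      by_contra hne
      have hy'in : y' ∈ A.erase y := Finset.mem_erase.mpr ⟨fun h => hne h.symm, hy'⟩
      have h1 : y ≤ a' ⊔ (a ⊔ (A.erase y).sup id) := by
        calc y ≤ a' ⊔ y := le_sup_right
        _ = a' ⊔ y' := hEq
        _ ≤ a' ⊔ (a ⊔ (A.erase y).sup id) := by
            exact sup_le_sup_left (le_sup_of_le_right (Finset.le_sup (f := id) hy'in)) _
      have h2 : s ≤ a' ⊔ (a ⊔ (A.erase y).sup id) := by
        rw [hs]
        refine sup_le (le_sup_of_le_right le_sup_left) (Finset.sup_le fun u hu => ?_)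
        rcases eq_or_ne u y with rfl | hne
        · exact h1
        · exact le_sup_of_le_right (le_sup_of_le_right
            (Finset.le_sup (f := id) (Finset.mem_erase.mpr ⟨hne, hu⟩)))
      exact absurd h2 (hall y hy).not_ge
    set A'' : Finset L := A.image (fun y => a' ⊔ y) with hA''
    have hcard : A''.card = A.card := Finset.card_image_of_injOn hinj
    have hsz : A.sup id ≤ s := le_sup_right
    have hsup'' : a' ⊔ A''.sup id = s := by
      apply le_antisymm
      · refine sup_le ha's (Finset.sup_le ?_)
        intro u hu
        obtain ⟨y, hy, rfl⟩ := Finset.mem_image.mp hu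
        exact sup_le ha's ((Finset.le_sup (f := id) hy).trans hsz)
      · rw [hs]
        refine sup_le (haa'.le.trans le_sup_left) (Finset.sup_le ?_)
        intro y hy
        exact le_sup_of_le_right ((le_sup_right (a := a')).trans
          (Finset.le_sup (f := id) (Finset.mem_image_of_mem _ hy)))
    have ha'' : ∀ u ∈ A'', a' ≤ u := by
      intro u hu
      obtain ⟨y, hy, rfl⟩ := Finset.mem_image.mp hu
      exact le_sup_left
    have hirr'' : ∀ u ∈ A'', a' ⊔ (A''.erase u).sup id < a' ⊔ A''.sup id := by
      intro u hu
      rw [hsup'']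
      obtain ⟨y, hy, rfl⟩ := Finset.mem_image.mp hu
      have hb : (A''.erase (a' ⊔ y)).sup id ≤ a' ⊔ (A.erase y).sup id := by
        refine Finset.sup_le ?_
        intro v hv
        obtain ⟨hvne, hvmem⟩ := Finset.mem_erase.mp hv
        obtain ⟨y'', hy'', rfl⟩ := Finset.mem_image.mp hvmem
        have : y'' ≠ y := fun h => hvne (by rw [h])
        exact sup_le_sup_left
          (Finset.le_sup (f := id) (Finset.mem_erase.mpr ⟨this, hy''⟩)) _
      calc a' ⊔ (A''.erase (a' ⊔ y)).sup id ≤ a' ⊔ (a' ⊔ (A.erase y).sup id) :=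
            sup_le_sup_left hb _
      _ = a' ⊔ (A.erase y).sup id := by rw [← sup_assoc, sup_idem]
      _ ≤ a' ⊔ (a ⊔ (A.erase y).sup id) := by
            rw [← sup_assoc]; exact sup_le_sup_right le_sup_left _
      _ < s := hall y hy
    have hmeas : (Finset.univ.filter fun u : L => a' ≤ u).card * C
        + (∑ w ∈ A'', (Finset.univ.filter fun u : L => u ≤ w).card) < n := by
      have hflt : (Finset.univ.filter fun u : L => a' ≤ u).card
          < (Finset.univ.filter fun u : L => a ≤ u).card := by
        apply Finset.card_lt_card
        rw [Finset.ssubset_iff_of_subset]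
        · exact ⟨a, by simp, by simp [haa'.not_ge]⟩
        · intro u hu
          simp only [Finset.mem_filter, Finset.mem_univ, true_and] at hu ⊢
          exact haa'.le.trans hu
      have h1 := sumh_lt (L := L) A''
      have h2 : ((Finset.univ.filter fun u : L => a' ≤ u).card + 1)
          ≤ (Finset.univ.filter fun u : L => a ≤ u).card := hflt
      calc (Finset.univ.filter fun u : L => a' ≤ u).card * C
            + (∑ w ∈ A'', (Finset.univ.filter fun u : L => u ≤ w).card)
          < (Finset.univ.filter fun u : L => a' ≤ u).card * C + C := by omega
        _ = ((Finset.univ.filter fun u : L => a' ≤ u).card + 1) * C := by ring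
        _ ≤ (Finset.univ.filter fun u : L => a ≤ u).card * C := Nat.mul_le_mul_right _ h2
        _ ≤ n := le_trans (Nat.le_add_right _ _) hμ
    obtain ⟨x, hx⟩ := IH _ hmeas a' A'' le_rfl ha'' hirr''
    exact ⟨x, hcard ▸ hx⟩
  · -- Case 3: every element of A covers a
    push_neg at hc1 hc2
    have hcov : ∀ y ∈ A, a ⋖ y := by
      intro y hy
      have hys : y ≤ s := le_sup_of_le_right (Finset.le_sup (f := id) hy)
      have hay : a < y := by
        rcases lt_or_eq_of_le (ha y hy) with h | h
        · exact h
        · exfalso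
          have h1 : s ≤ a ⊔ (A.erase y).sup id := by
            rw [hs]
            refine sup_le le_sup_left (Finset.sup_le fun u hu => ?_)
            rcases eq_or_ne u y with rfl | hne
            · exact le_sup_of_le_left h.ge
            · exact le_sup_of_le_right (Finset.le_sup (f := id) (Finset.mem_erase.mpr ⟨hne, hu⟩))
          exact (hirr y hy).not_ge h1
      refine ⟨hay, fun z haz hzy => ?_⟩
      have hzs : z ≤ s := hzy.le.trans hys
      obtain ⟨y', hy', hy'ge⟩ := hc2 z haz hzs
      have hy'eq : z ⊔ (a ⊔ (A.erase y').sup id) = s := by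
        have hle : z ⊔ (a ⊔ (A.erase y').sup id) ≤ s := sup_le hzs (hts y' hy')
        rcases hle.lt_or_eq with hlt | hEq
        · exact absurd hlt hy'ge
        · exact hEq
      rcases eq_or_ne y' y with rfl | hne
      · exact hc1 y' hy' z haz.le hzy hy'eq
      · have hyin : y ∈ A.erase y' := Finset.mem_erase.mpr ⟨hne.symm, hy⟩
        have h1 : z ≤ a ⊔ (A.erase y').sup id :=
          le_sup_of_le_right (hzy.le.trans (Finset.le_sup (f := id) hyin))
        rw [sup_eq_right.mpr h1] at hy'eq
        exact absurd hy'eq (ne_of_lt (hirr y' hy'))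
    refine ⟨a, Finset.card_le_card ?_⟩
    intro y hy
    simp only [Finset.mem_filter, Finset.mem_univ, true_and]
    exact hcov y hy

private lemma meet_lem {L : Type*} [Lattice L] [Fintype L] [OrderBot L]
    (hSDm : ∀ a b c : L, a ⊓ b = a ⊓ c → a ⊓ b = a ⊓ (b ⊔ c))
    (x y : L) (hxy : x ⋖ y) :
    ∀ B : Finset L, (∀ c ∈ B, (x ⋖ c) ∧ c ≠ y) → y ⊓ (x ⊔ B.sup id) = x := by
  intro B
  induction B using Finset.induction with
  | empty => intro _; simpa using inf_eq_right.mpr hxy.le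
  | @insert c B hcB ih =>
    intro hB
    have hxc : x ⋖ c := (hB c (Finset.mem_insert_self c B)).1
    have hcy : c ≠ y := (hB c (Finset.mem_insert_self c B)).2
    have h1 : y ⊓ c = x := by
      by_contra hne
      have hlt : x < y ⊓ c := lt_of_le_of_ne (le_inf hxy.le hxc.le) (Ne.symm hne)
      have hlty : y ⊓ c < y := by
        refine lt_of_le_of_ne inf_le_left fun h => ?_
        have hyc : y ≤ c := h ▸ inf_le_right
        rcases hyc.lt_or_eq with hlt2 | heq
        · exact hxc.2 hxy.lt hlt2
        · exact hcy heq.symm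
      exact hxy.2 hlt hlty
    have h2 : y ⊓ (x ⊔ B.sup id) = x :=
      ih (fun c' hc' => hB c' (Finset.mem_insert_of_mem hc'))
    have h3 : y ⊓ (x ⊔ B.sup id) = y ⊓ ((x ⊔ B.sup id) ⊔ c) :=
      hSDm y (x ⊔ B.sup id) c (h2.trans h1.symm)
    have h4 : x ⊔ (insert c B).sup id = (x ⊔ B.sup id) ⊔ c := by
      rw [Finset.sup_insert]
      simp [sup_assoc, sup_comm, sup_left_comm]
    rw [h4, ← h3, h2]

open Classical in
theorem stmt14 {L : Type*} [Lattice L] [Fintype L] [BoundedOrder L]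
    (hSDm : ∀ a b c : L, a ⊓ b = a ⊓ c → a ⊓ b = a ⊓ (b ⊔ c)) :
    IsLeast {N : ℕ | ∀ S : Finset L, ∃ S' ⊆ S, S'.card ≤ N ∧ S'.sup id = S.sup id}
      (Finset.univ.sup fun x : L => (Finset.univ.filter fun y : L => x ⋖ y).card) := by
  constructor
  · -- membership: every join reduces to at most n* elements
    intro S
    have hne : (S.powerset.filter fun T => T.sup id = S.sup id).Nonempty :=
      ⟨S, Finset.mem_filter.mpr ⟨Finset.mem_powerset_self S, rfl⟩⟩
    obtain ⟨A, hAmem, hAmin⟩ :=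
      Finset.exists_min_image _ (fun T => T.card) hne
    obtain ⟨hAsub, hAsup⟩ := Finset.mem_filter.mp hAmem
    have hAsub' : A ⊆ S := Finset.mem_powerset.mp hAsub
    have hirr : ∀ y ∈ A, (⊥ : L) ⊔ (A.erase y).sup id < ⊥ ⊔ A.sup id := by
      intro y hy
      rw [bot_sup_eq, bot_sup_eq]
      refine lt_of_le_of_ne (Finset.sup_mono (Finset.erase_subset y A)) ?_
      intro hEq
      have hmem : A.erase y ∈ S.powerset.filter fun T => T.sup id = S.sup id := by
        refine Finset.mem_filter.mpr ⟨Finset.mem_powerset.mpr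
          ((Finset.erase_subset y A).trans hAsub'), ?_⟩
        rw [hEq, hAsup]
      have := hAmin _ hmem
      have hlt : (A.erase y).card < A.card := Finset.card_erase_lt_of_mem hy
      omega
    obtain ⟨x, hx⟩ := key_aux
      ((Finset.univ.filter fun z : L => (⊥:L) ≤ z).card * (Fintype.card L * Fintype.card L + 1)
        + (∑ y ∈ A, (Finset.univ.filter fun z : L => z ≤ y).card))
      ⊥ A le_rfl (fun y _ => bot_le) hirr
    exact ⟨A, hAsub', hx.trans (Finset.le_sup (f := fun x : L => (Finset.univ.filter fun y : L => x ⋖ y).card) (Finset.mem_univ x)), hAsup⟩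
  · -- lower bound
    intro N hN
    refine Finset.sup_le fun x _ => ?_
    obtain ⟨S', hS'sub, hS'card, hS'sup⟩ := hN (Finset.univ.filter fun y : L => x ⋖ y)
    refine le_trans (Finset.card_le_card ?_) hS'card
    intro y hy
    have hxy : x ⋖ y := (Finset.mem_filter.mp hy).2
    by_contra hy'
    have hsub : S' ⊆ (Finset.univ.filter fun y' : L => x ⋖ y').erase y := by
      intro u hu
      exact Finset.mem_erase.mpr ⟨fun h => hy' (h ▸ hu), hS'sub hu⟩
    have hyU : y ≤ ((Finset.univ.filter fun y' : L => x ⋖ y').erase y).sup id := by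
      calc y ≤ (Finset.univ.filter fun y' : L => x ⋖ y').sup id := Finset.le_sup (f := id) hy
      _ = S'.sup id := hS'sup.symm
      _ ≤ _ := Finset.sup_mono hsub
    have hml := meet_lem hSDm x y hxy ((Finset.univ.filter fun y' : L => x ⋖ y').erase y)
      (fun c hc => ⟨(Finset.mem_filter.mp (Finset.mem_of_mem_erase hc)).2,
        Finset.ne_of_mem_erase hc⟩)
    have : y ⊓ (x ⊔ ((Finset.univ.filter fun y' : L => x ⋖ y').erase y).sup id) = y :=
      inf_eq_left.mpr (hyU.trans le_sup_right)
    rw [hml] at this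
    exact hxy.ne this
end

section
/- A lattice has breadth at most two if and only if it contains no crown of order six as a subposet. -/
/-!
Breadth at most two is a condition on three elements: by induction on a finite set, it suffices
that every join `x ⊔ y ⊔ z` is already the join of two of `x, y, z`. A triple violating this is
irredundant (no element lies below the join of the other two), and irredundant triples `e` and
crowns of order six determine each other: from `e` take `bᵢ = eᵢ ⊔ eᵢ₊₁` and `aᵢ = bᵢ₋₁ ⊓ bᵢ`;
from a crown, the `aᵢ` are irredundant because `aᵢ₊₁ ⊔ aᵢ₊₂ ≤ bᵢ₊₁`, which does not lie above `aᵢ`.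
-/

open Finset

section Breadth

variable {L : Type*} [SemilatticeSup L]

theorem exists_subset_card_le_two_sup'_eq_iff {S : Finset L} (hS : S.Nonempty) :
    (∃ (S' : Finset L) (hS' : S'.Nonempty), S' ⊆ S ∧ S'.card ≤ 2 ∧ S'.sup' hS' id = S.sup' hS id) ↔
      ∃ u ∈ S, ∃ v ∈ S, u ⊔ v = S.sup' hS id := by
  classical
  constructor
  · rintro ⟨S', hS', hsub, hcard, hsup⟩
    obtain hcard | hcard : S'.card = 1 ∨ S'.card = 2 := by
      have := hS'.card_pos
      omega
    · obtain ⟨u, rfl⟩ := card_eq_one.mp hcard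
      exact ⟨u, hsub (mem_singleton_self u), u, hsub (mem_singleton_self u), by simpa using hsup⟩
    · obtain ⟨u, v, -, rfl⟩ := card_eq_two.mp hcard
      exact ⟨u, hsub (by simp), v, hsub (by simp), by simpa [sup'_insert] using hsup⟩
  · rintro ⟨u, hu, v, hv, huv⟩
    refine ⟨{u, v}, insert_nonempty u {v}, insert_subset hu (singleton_subset_iff.mpr hv),
      card_le_two, ?_⟩
    simpa [sup'_insert] using huv

theorem exists_sup_eq_sup'_of_forall_le_sup
    (h : ∀ x y z : L, x ≤ y ⊔ z ∨ y ≤ z ⊔ x ∨ z ≤ x ⊔ y) {S : Finset L} (hS : S.Nonempty) :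
    ∃ u ∈ S, ∃ v ∈ S, u ⊔ v = S.sup' hS id := by
  induction hS using Nonempty.cons_induction with
  | singleton a => exact ⟨a, mem_singleton_self a, a, mem_singleton_self a, sup_idem a⟩
  | cons a s ha hs ih =>
    obtain ⟨u, hu, v, hv, huv⟩ := ih
    rw [sup'_cons hs, ← huv]
    have hu' : u ∈ cons a s ha := mem_cons_of_mem hu
    have hv' : v ∈ cons a s ha := mem_cons_of_mem hv
    have ha' : a ∈ cons a s ha := mem_cons_self a s
    rcases h a u v with hle | hle | hle
    · exact ⟨u, hu', v, hv', (sup_eq_right.mpr hle).symm⟩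
    · refine ⟨v, hv', a, ha', le_antisymm ?_ ?_⟩
      · exact sup_le (le_sup_right.trans le_sup_right) le_sup_left
      · exact sup_le le_sup_right (sup_le hle le_sup_left)
    · refine ⟨a, ha', u, hu', le_antisymm ?_ ?_⟩
      · exact sup_le le_sup_left (le_sup_left.trans le_sup_right)
      · exact sup_le le_sup_left (sup_le le_sup_right hle)

def IsIrredundantTriple (e : Fin 3 → L) : Prop :=
  ∀ i, ¬ e i ≤ e (i + 1) ⊔ e (i + 2)

theorem isIrredundantTriple_of_not_le_sup {x y z : L}
    (hx : ¬ x ≤ y ⊔ z) (hy : ¬ y ≤ z ⊔ x) (hz : ¬ z ≤ x ⊔ y) :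
    IsIrredundantTriple ![x, y, z] := by
  intro i
  fin_cases i <;> assumption

namespace IsIrredundantTriple

variable {e : Fin 3 → L}

theorem le_sup_iff (he : IsIrredundantTriple e) {i j k : Fin 3} :
    e k ≤ e i ⊔ e j ↔ k = i ∨ k = j := by
  refine ⟨fun hk => ?_, ?_⟩
  · by_contra! hne
    have le_of_ne : ∀ l, l ≠ k → e l ≤ e (k + 1) ⊔ e (k + 2) := by
      intro l hl
      obtain rfl | rfl : l = k + 1 ∨ l = k + 2 := by omega
      exacts [le_sup_left, le_sup_right]
    exact he k (hk.trans (sup_le (le_of_ne i hne.1.symm) (le_of_ne j hne.2.symm)))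
  · rintro (rfl | rfl)
    exacts [le_sup_left, le_sup_right]

theorem not_forall_exists_sup_eq_sup' (he : IsIrredundantTriple e) :
    ¬ ∀ (S : Finset L) (hS : S.Nonempty), ∃ u ∈ S, ∃ v ∈ S, u ⊔ v = S.sup' hS id := by
  classical
  intro h
  obtain ⟨_, hu, _, hv, huv⟩ := h (univ.image e) (univ_nonempty.image e)
  obtain ⟨i, -, rfl⟩ := mem_image.mp hu
  obtain ⟨j, -, rfl⟩ := mem_image.mp hv
  obtain ⟨k, hki, hkj⟩ : ∃ k, k ≠ i ∧ k ≠ j :=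
    (by decide : ∀ i j : Fin 3, ∃ k, k ≠ i ∧ k ≠ j) i j
  have hk : e k ≤ e i ⊔ e j := huv ▸ le_sup' id (mem_image_of_mem e (mem_univ k))
  exact (he.le_sup_iff.mp hk).elim hki hkj

end IsIrredundantTriple

end Breadth

/-- The crown `a₀ < b₀ > a₁ < b₁ > a₂ < b₂ > a₀`. -/
def IsCrownSix {L : Type*} [LE L] (a b : Fin 3 → L) : Prop :=
  (∀ i j, a i ≤ b j ↔ (i = j ∨ i = j + 1)) ∧
  (∀ i j, ¬ b i ≤ a j) ∧
  (∀ i j, i ≠ j → ¬ a i ≤ a j ∧ ¬ b i ≤ b j)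

theorem IsCrownSix.isIrredundantTriple {L : Type*} [SemilatticeSup L] {a b : Fin 3 → L}
    (h : IsCrownSix a b) : IsIrredundantTriple a := by
  intro i hi
  have hb : a (i + 1) ⊔ a (i + 2) ≤ b (i + 1) :=
    sup_le ((h.1 _ _).mpr (Or.inl rfl)) ((h.1 _ _).mpr (Or.inr (by omega)))
  have := (h.1 _ _).mp (hi.trans hb)
  omega

theorem IsIrredundantTriple.isCrownSix {L : Type*} [Lattice L] {e : Fin 3 → L}
    (he : IsIrredundantTriple e) :
    IsCrownSix (fun i => (e (i - 1) ⊔ e i) ⊓ (e i ⊔ e (i + 1))) (fun i => e i ⊔ e (i + 1)) := by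
  have le_a_iff : ∀ i k, e k ≤ (e (i - 1) ⊔ e i) ⊓ (e i ⊔ e (i + 1)) ↔ k = i := by
    intro i k
    rw [le_inf_iff, he.le_sup_iff, he.le_sup_iff]
    omega
  have le_a : ∀ i, e i ≤ (e (i - 1) ⊔ e i) ⊓ (e i ⊔ e (i + 1)) := fun i => (le_a_iff i i).mpr rfl
  refine ⟨fun i j => ⟨fun hij => ?_, ?_⟩, fun i j hij => ?_,
    fun i j hij => ⟨fun hij' => ?_, fun hij' => ?_⟩⟩
  · exact he.le_sup_iff.mp ((le_a i).trans hij)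
  · rintro (rfl | rfl)
    · exact inf_le_right
    · simpa only [add_sub_cancel_right] using inf_le_left
  · have h0 := (le_a_iff j i).mp (le_sup_left.trans hij)
    have h1 := (le_a_iff j (i + 1)).mp (le_sup_right.trans hij)
    omega
  · exact hij ((le_a_iff j i).mp ((le_a i).trans hij'))
  · have h0 := he.le_sup_iff.mp (le_sup_left.trans hij')
    have h1 := he.le_sup_iff.mp (le_sup_right.trans hij')
    omega

theorem stmt15 {L : Type*} [Lattice L] :
    (∀ (S : Finset L) (hS : S.Nonempty), ∃ (S' : Finset L) (hS' : S'.Nonempty),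
        S' ⊆ S ∧ S'.card ≤ 2 ∧ S'.sup' hS' id = S.sup' hS id) ↔
      ¬ ∃ a b : Fin 3 → L,
        (∀ i j, a i ≤ b j ↔ (i = j ∨ i = j + 1)) ∧
        (∀ i j, ¬ b i ≤ a j) ∧
        (∀ i j, i ≠ j → ¬ a i ≤ a j ∧ ¬ b i ≤ b j) := by
  simp_rw [exists_subset_card_le_two_sup'_eq_iff]
  constructor
  · rintro hbreadth ⟨a, b, hcrown⟩
    exact (IsCrownSix.isIrredundantTriple hcrown).not_forall_exists_sup_eq_sup' hbreadth
  · intro hno S hS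
    refine exists_sup_eq_sup'_of_forall_le_sup (fun x y z => ?_) hS
    by_contra! h
    exact hno ⟨_, _, (isIrredundantTriple_of_not_le_sup h.1 h.2.1 h.2.2).isCrownSix⟩
end

section
/- A finite semidistributive lattice contains no crown (of any order 2n, n ≥ 3) as a subposet if and only if it contains no crown of order six as a subposet. -/
/-!
Every crown of order `2n ≥ 8` in a join-semidistributive lattice yields a strictly smaller
crown, so by induction one of order six. If an element `x` lies above three of the minimal
elements `aᵢ` but not above all of them, two cyclically consecutive `aᵢ ≤ x` enclose a gap, and
the segment of the crown over that gap, closed up by `x`, is a shorter crown; dually for an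
element below three of the maximal elements `bⱼ`. So in a crown with no shorter crown,
`b₀ ⊔ a₂` and `b₀ ⊔ a₃` lie above every `aᵢ` and hence coincide; `SD∨` turns this into
`b₀ ⊔ a₂ = b₀ ⊔ (a₂ ⊓ a₃)`, and `a₂ ⊓ a₃ ≤ b₁, b₂, b₃` forces `a₂ ⊓ a₃ ≤ b₀`, whence
`a₂ ≤ b₀`, which a crown of order at least eight forbids.
-/

/-- `L` contains a crown of order `2n` as a subposet: minimal elements `a 0,…,a (n-1)`,
maximal elements `b 0,…,b (n-1)`, whose only comparabilities are
`a j < b j` and `a (j+1) < b j` (indices mod `n`). -/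
def HasCrown (L : Type*) [Lattice L] (n : ℕ) : Prop :=
  ∃ a b : Fin n → L,
    (∀ i j, a i ≤ b j ↔ (i = j ∨ (i : ℕ) = ((j : ℕ) + 1) % n)) ∧
    (∀ i j, ¬ b i ≤ a j) ∧
    (∀ i j, i ≠ j → ¬ a i ≤ a j ∧ ¬ b i ≤ b j)

open Finset

namespace Fin

variable {n : ℕ} [NeZero n]

theorem val_eq_add_one_mod_iff {i j : Fin n} : (i : ℕ) = ((j : ℕ) + 1) % n ↔ i = j + 1 := by
  rw [Fin.ext_iff, Fin.val_add, Fin.val_one', Nat.add_mod_mod]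

theorem add_one_ne_self (hn : 2 ≤ n) (i : Fin n) : i + 1 ≠ i := by
  rw [Ne, add_eq_left, Fin.ext_iff, Fin.val_one', Nat.mod_eq_of_lt (by omega)]
  simp

theorem add_one_add_one_ne_self (hn : 3 ≤ n) (i : Fin n) : i + 1 + 1 ≠ i := by
  rw [Ne, add_assoc, add_eq_left, Fin.ext_iff, Fin.val_add, Fin.val_one',
    Nat.mod_eq_of_lt (by omega : 1 < n), Nat.mod_eq_of_lt (by omega : 1 + 1 < n)]
  simp

theorem castLE_castSucc_add_one {m : ℕ} (h : m + 1 ≤ n) (j : Fin m) :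
    castLE h j.castSucc + 1 = castLE h j.succ :=
  Fin.ext (val_add_one_of_lt' (by simp; omega))

open Fin.CommRing in
theorem exists_mem_add_one_notMem {S : Finset (Fin n)} {p q : Fin n} (hp : p ∈ S) (hq : q ∉ S) :
    ∃ s ∈ S, s + 1 ∉ S := by
  by_contra! hS
  have hpk : ∀ k : ℕ, p + k ∈ S := by
    intro k
    induction k with
    | zero => simpa using hp
    | succ k ih => simpa [Nat.cast_succ, ← add_assoc] using hS _ ih
  exact hq (by simpa using hpk (q - p).val)

theorem exists_gap_of_zero_mem {S : Finset (Fin n)} (h0 : 0 ∈ S) (h1 : 1 ∉ S) (hS : 2 < #S) :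
    ∃ (m : ℕ) (hm : m + 1 < n), 2 ≤ m ∧
      ∀ i : Fin (m + 1), castLE hm.le i ∈ S ↔ i = 0 ∨ i = last m := by
  have hT : (S.erase 0).Nonempty := by
    rw [← card_pos, card_erase_of_mem h0]
    omega
  set d := (S.erase 0).min' hT
  have hd : d ∈ S.erase 0 := min'_mem _ _
  have hd_le : ∀ k ∈ S, k ≠ 0 → d ≤ k := fun k hk hk0 => min'_le _ _ (mem_erase.2 ⟨hk0, hk⟩)
  have hn : 2 ≤ n - d := by
    have := card_le_card (fun k hk => mem_Ici.2 (min'_le _ k hk) : S.erase 0 ⊆ Ici d)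
    rw [card_erase_of_mem h0, Fin.card_Ici] at this
    omega
  have hd2 : 2 ≤ (d : ℕ) := by
    have hd0 : d ≠ 0 := (mem_erase.1 hd).1
    have hd1 : d ≠ 1 := fun h => h1 (h ▸ (mem_erase.1 hd).2)
    rw [Ne, Fin.ext_iff] at hd0 hd1
    rw [Fin.val_one', Nat.mod_eq_of_lt (by omega)] at hd1
    simp only [val_zero] at hd0
    omega
  refine ⟨d, by omega, hd2, fun i => ⟨fun hi => ?_, ?_⟩⟩
  · by_contra! hne
    have hi0 : (i : ℕ) ≠ 0 := fun h => hne.1 (Fin.ext h)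
    have hid : (i : ℕ) < d := Fin.val_lt_last hne.2
    have := hd_le _ hi fun h => hi0 (by simpa using congrArg Fin.val h)
    rw [Fin.le_def, val_castLE] at this
    omega
  · rintro (rfl | rfl)
    · exact h0
    · exact (mem_erase.1 hd).2

theorem exists_gap {S : Finset (Fin n)} (hS : 2 < #S) {q : Fin n} (hq : q ∉ S) :
    ∃ (s : Fin n) (m : ℕ) (hm : m + 1 < n), 2 ≤ m ∧
      ∀ i : Fin (m + 1), s + castLE hm.le i ∈ S ↔ i = 0 ∨ i = last m := by
  obtain ⟨p, hp⟩ := card_pos.1 (by omega : 0 < #S)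
  obtain ⟨s, hs, hs1⟩ := exists_mem_add_one_notMem hp hq
  have hcard : #{k | s + k ∈ S} = #S := card_equiv (Equiv.addLeft s) (by simp)
  obtain ⟨m, hm, hm2, hgap⟩ :=
    exists_gap_of_zero_mem (S := {k | s + k ∈ S}) (by simpa using hs) (by simpa using hs1)
      (by omega)
  exact ⟨s, m, hm, hm2, by simpa using hgap⟩

theorem mk_add_one {k : ℕ} (hk : k + 1 < n) : (⟨k + 1, hk⟩ : Fin n) = ⟨k, by omega⟩ + 1 :=
  Fin.ext (val_add_one_of_lt' (i := ⟨k, by omega⟩) hk).symm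

end Fin

section Crown

open OrderDual

variable {L : Type*} [Lattice L]

-- The comparabilities of `HasCrown` only; for `3 ≤ n` the incomparabilities follow.
def IsCrown {n : ℕ} [NeZero n] (a b : Fin n → L) : Prop :=
  ∀ i j, a i ≤ b j ↔ i = j ∨ i = j + 1

namespace IsCrown

variable {n : ℕ} [NeZero n] {a b : Fin n → L}

theorem le_self (h : IsCrown a b) (i : Fin n) : a i ≤ b i := (h i i).2 (Or.inl rfl)

theorem le_add_one (h : IsCrown a b) (i : Fin n) : a (i + 1) ≤ b i := (h (i + 1) i).2 (Or.inr rfl)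

theorem hasCrown (h : IsCrown a b) (hn : 3 ≤ n) : HasCrown L n := by
  have eq_of_a_le : ∀ i j, a i ≤ a j → i = j := by
    intro i j hij
    rcases (h i j).1 (hij.trans (h.le_self j)) with hij' | rfl
    · exact hij'
    rcases (h _ (j - 1)).1 (hij.trans (by simpa using h.le_add_one (j - 1))) with h' | h'
    · exact absurd (eq_sub_iff_add_eq.1 h') (Fin.add_one_add_one_ne_self hn j)
    · exact absurd (by simpa using h') (Fin.add_one_ne_self (by omega) j)
  have eq_of_b_le : ∀ i j, b i ≤ b j → i = j := by
    intro i j hij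
    rcases (h i j).1 ((h.le_self i).trans hij) with hij' | rfl
    · exact hij'
    rcases (h _ j).1 ((h.le_add_one _).trans hij) with h' | h'
    · exact absurd h' (Fin.add_one_add_one_ne_self hn j)
    · exact absurd (add_right_cancel h') (Fin.add_one_ne_self (by omega) j)
  refine ⟨a, b, fun i j => by rw [h, Fin.val_eq_add_one_mod_iff], fun i j hij => ?_,
    fun i j hij => ⟨mt (eq_of_a_le i j) hij, mt (eq_of_b_le i j) hij⟩⟩
  obtain rfl := eq_of_a_le _ _ ((h.le_self i).trans hij)
  exact Fin.add_one_ne_self (by omega) i (eq_of_a_le _ _ ((h.le_add_one i).trans hij))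

theorem rotate (h : IsCrown a b) (s : Fin n) :
    IsCrown (fun i => a (s + i)) (fun j => b (s + j)) := by
  intro i j
  rw [h, add_assoc, add_right_inj, add_right_inj]

-- Reversing the order swaps `a` and `b`; negating the indices restores `a (j + 1) ≤ b j`.
theorem dual (h : IsCrown a b) :
    IsCrown (L := Lᵒᵈ) (fun i => toDual (b (-i))) (fun j => toDual (a (-j))) := by
  intro i j
  rw [toDual_le_toDual, h, neg_inj, eq_comm (a := j), eq_neg_add_iff_add_eq, ← sub_eq_add_neg,
    sub_eq_iff_eq_add, add_comm 1 j]

theorem restrict (h : IsCrown a b) {m : ℕ} (hm : m + 1 ≤ n) {x : L}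
    (hx : ∀ i, a (Fin.castLE hm i) ≤ x ↔ i = 0 ∨ i = Fin.last m) :
    IsCrown (fun i => a (Fin.castLE hm i))
      (Fin.lastCases x fun j => b (Fin.castLE hm j.castSucc)) := by
  intro i j
  cases j using Fin.lastCases with
  | last => simp only [Fin.lastCases_last, hx, Fin.last_add_one, or_comm]
  | cast j =>
    dsimp only
    rw [Fin.lastCases_castSucc, h, Fin.castLE_castSucc_add_one, Fin.castLE_inj, Fin.castLE_inj,
      Fin.coeSucc_eq_succ]

end IsCrown

theorem hasCrown_iff_exists_isCrown {n : ℕ} [NeZero n] (hn : 3 ≤ n) :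
    HasCrown L n ↔ ∃ a b : Fin n → L, IsCrown a b :=
  ⟨fun ⟨a, b, h, _⟩ => ⟨a, b, fun i j => by rw [h, Fin.val_eq_add_one_mod_iff]⟩,
    fun ⟨_, _, h⟩ => h.hasCrown hn⟩

theorem HasCrown.of_orderDual {n : ℕ} (hn : 3 ≤ n) (h : HasCrown Lᵒᵈ n) : HasCrown L n := by
  have : NeZero n := ⟨by omega⟩
  obtain ⟨a, b, hab⟩ := (hasCrown_iff_exists_isCrown hn).1 h
  exact (hasCrown_iff_exists_isCrown hn).2 ⟨_, _, hab.dual⟩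

namespace IsCrown

variable {n : ℕ} [NeZero n] {a b : Fin n → L}

theorem forall_le_of_three (h : IsCrown a b) (hmin : ∀ m, 3 ≤ m → m < n → ¬ HasCrown L m)
    {x : L} {i j k : Fin n} (hij : i ≠ j) (hik : i ≠ k) (hjk : j ≠ k)
    (hi : a i ≤ x) (hj : a j ≤ x) (hk : a k ≤ x) (l : Fin n) : a l ≤ x := by
  classical
  by_contra hl
  obtain ⟨s, m, hm, hm2, hgap⟩ := Fin.exists_gap (S := {k | a k ≤ x})
    (two_lt_card.2 ⟨i, by simpa, j, by simpa, k, by simpa, hij, hik, hjk⟩) (q := l) (by simpa)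
  have hcrown := (h.rotate s).restrict hm.le (x := x) (by simpa using hgap)
  exact hmin (m + 1) (by omega) hm (hcrown.hasCrown (by omega))

theorem forall_ge_of_three (h : IsCrown a b) (hmin : ∀ m, 3 ≤ m → m < n → ¬ HasCrown L m)
    {y : L} {i j k : Fin n} (hij : i ≠ j) (hik : i ≠ k) (hjk : j ≠ k)
    (hi : y ≤ b i) (hj : y ≤ b j) (hk : y ≤ b k) (l : Fin n) : y ≤ b l := by
  have hmin' (m : ℕ) (hm3 : 3 ≤ m) (hmn : m < n) : ¬ HasCrown Lᵒᵈ m :=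
    fun hc => hmin m hm3 hmn (hc.of_orderDual hm3)
  simpa using h.dual.forall_le_of_three hmin' (x := toDual y) (neg_injective.ne hij)
    (neg_injective.ne hik) (neg_injective.ne hjk) (by simpa) (by simpa) (by simpa) (-l)

theorem exists_hasCrown_lt (hSD : ∀ a b c : L, a ⊔ b = a ⊔ c → a ⊔ b = a ⊔ (b ⊓ c))
    (hn : 4 ≤ n) (h : IsCrown a b) :
    ∃ m, 3 ≤ m ∧ m < n ∧ HasCrown L m := by
  by_contra! hmin
  set i₀ : Fin n := ⟨0, by omega⟩
  set i₁ : Fin n := ⟨1, by omega⟩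
  set i₂ : Fin n := ⟨2, by omega⟩
  set i₃ : Fin n := ⟨3, by omega⟩
  have h₁ : i₁ = i₀ + 1 := Fin.mk_add_one _
  have h₂ : i₂ = i₁ + 1 := Fin.mk_add_one _
  have hu : ∀ l, a l ≤ b i₀ ⊔ a i₂ :=
    h.forall_le_of_three hmin (i := i₀) (j := i₁) (k := i₂) (by simp [i₀, i₁]) (by simp [i₀, i₂])
      (by simp [i₁, i₂]) (le_sup_of_le_left (h.le_self i₀))
      (le_sup_of_le_left (h₁ ▸ h.le_add_one i₀)) le_sup_right
  have hv : ∀ l, a l ≤ b i₀ ⊔ a i₃ :=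
    h.forall_le_of_three hmin (i := i₀) (j := i₁) (k := i₃) (by simp [i₀, i₁]) (by simp [i₀, i₃])
      (by simp [i₁, i₃]) (le_sup_of_le_left (h.le_self i₀))
      (le_sup_of_le_left (h₁ ▸ h.le_add_one i₀)) le_sup_right
  have hw : ∀ l, a i₂ ⊓ a i₃ ≤ b l :=
    h.forall_ge_of_three hmin (i := i₁) (j := i₂) (k := i₃) (by simp [i₁, i₂]) (by simp [i₁, i₃])
      (by simp [i₂, i₃]) (inf_le_of_left_le (h₂ ▸ h.le_add_one i₁))
      (inf_le_of_left_le (h.le_self i₂)) (inf_le_of_right_le (h.le_self i₃))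
  have heq : b i₀ ⊔ a i₂ = b i₀ ⊔ a i₃ :=
    le_antisymm (sup_le le_sup_left (hv i₂)) (sup_le le_sup_left (hu i₃))
  have h₂₀ : a i₂ ≤ b i₀ :=
    calc a i₂ ≤ b i₀ ⊔ a i₂ := le_sup_right
      _ = b i₀ ⊔ (a i₂ ⊓ a i₃) := hSD _ _ _ heq
      _ = b i₀ := sup_eq_left.2 (hw i₀)
  rcases (h i₂ i₀).1 h₂₀ with h' | h'
  · simp [i₀, i₂] at h'
  · simp [i₁, i₂, ← h₁] at h'

end IsCrown

theorem hasCrown_three_of_hasCrown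
    (hSD : ∀ a b c : L, a ⊔ b = a ⊔ c → a ⊔ b = a ⊔ (b ⊓ c))
    {n : ℕ} (hn : 3 ≤ n) (h : HasCrown L n) : HasCrown L 3 := by
  induction n using Nat.strong_induction_on with
  | _ n ih =>
    rcases hn.eq_or_lt with rfl | hn
    · exact h
    have : NeZero n := ⟨by omega⟩
    obtain ⟨a, b, hab⟩ := (hasCrown_iff_exists_isCrown (by omega)).1 h
    obtain ⟨m, hm3, hmn, hm⟩ := hab.exists_hasCrown_lt hSD hn
    exact ih m hmn hm3 hm

end Crown

theorem stmt17_general {L : Type*} [Lattice L]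
    (hSDj : ∀ a b c : L, a ⊔ b = a ⊔ c → a ⊔ b = a ⊔ (b ⊓ c)) :
    (¬ ∃ n : ℕ, 3 ≤ n ∧ HasCrown L n) ↔ ¬ HasCrown L 3 :=
  ⟨fun h h3 => h ⟨3, le_rfl, h3⟩, fun h3 ⟨_, hn, hc⟩ => h3 (hasCrown_three_of_hasCrown hSDj hn hc)⟩

theorem stmt17 {L : Type*} [Lattice L] [Fintype L]
    (hSDj : ∀ a b c : L, a ⊔ b = a ⊔ c → a ⊔ b = a ⊔ (b ⊓ c))
    (hSDm : ∀ a b c : L, a ⊓ b = a ⊓ c → a ⊓ b = a ⊓ (b ⊔ c)) :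
    (¬ ∃ n : ℕ, 3 ≤ n ∧ HasCrown L n) ↔ ¬ HasCrown L 3 :=
  stmt17_general hSDj
end

section
/- Let L be a finite breadth-two semidistributive lattice whose top element 1 covers exactly two elements a, b, whose bottom element 0 is covered by exactly two elements c, d, with a∧b = c∨d =: e. Then there do not exist x, y with c < x < b, d < y < b and {x, e, y} an antichain. -/
theorem stmt19 {L : Type*} [Lattice L] [Fintype L] [BoundedOrder L]
    (hSDj : ∀ a b c : L, a ⊔ b = a ⊔ c → a ⊔ b = a ⊔ (b ⊓ c))
    (hSDm : ∀ a b c : L, a ⊓ b = a ⊓ c → a ⊓ b = a ⊓ (b ⊔ c))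
    (hbreadth : ∀ z : L, {w : L | w ⋖ z}.ncard ≤ 2 ∧ {w : L | z ⋖ w}.ncard ≤ 2)
    (a b c d e x y : L)
    (ha : a ⋖ ⊤) (hb : b ⋖ ⊤) (hab : a ≠ b) (hcovtop : ∀ z : L, z ⋖ ⊤ → z = a ∨ z = b)
    (hc : ⊥ ⋖ c) (hd : ⊥ ⋖ d) (hcd : c ≠ d) (hcovbot : ∀ z : L, ⊥ ⋖ z → z = c ∨ z = d)
    (he1 : a ⊓ b = e) (he2 : c ⊔ d = e)
    (hcx : c < x) (hxb : x < b) (hdy : d < y) (hyb : y < b)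
    (hxe : ¬ x ≤ e) (hex : ¬ e ≤ x) (hye : ¬ y ≤ e) (hey : ¬ e ≤ y)
    (hxy : ¬ x ≤ y) (hyx : ¬ y ≤ x) :
    False := by
  -- x is not below a, else x ≤ a ⊓ b = e
  have hxa : ¬ x ≤ a := fun h => hxe (he1 ▸ le_inf h hxb.le)
  have hya : ¬ y ≤ a := fun h => hye (he1 ▸ le_inf h hyb.le)
  -- x ⊓ y = ⊥ : any atom below it would be c or d
  have hmeet : x ⊓ y = ⊥ := by
    by_contra hne
    have : IsAtomic L := isAtomic_of_orderBot_wellFounded_lt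
      (Finite.to_wellFoundedLT).wf
    rcases (eq_bot_or_exists_atom_le (x ⊓ y)).resolve_left hne with ⟨t, ht, htle⟩
    rcases hcovbot t ht.bot_covBy with rfl | rfl
    · exact hey (he2 ▸ sup_le (htle.trans inf_le_right) hdy.le)
    · exact hex (he2 ▸ sup_le hcx.le (htle.trans inf_le_left))
  -- a ⊔ x = ⊤ since a is a coatom and x ≰ a
  have hax : a ⊔ x = ⊤ := by
    rcases ha.eq_or_eq le_sup_left le_top with h | h
    · exact absurd (le_sup_right.trans h.le) hxa
    · exact h
  have hay : a ⊔ y = ⊤ := by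
    rcases ha.eq_or_eq le_sup_left le_top with h | h
    · exact absurd (le_sup_right.trans h.le) hya
    · exact h
  have := hSDj a x y (hax.trans hay.symm)
  rw [hax, hmeet, sup_bot_eq] at this
  exact ha.lt.ne (this.symm)
end
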